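/- arXiv:2311.17566 — 2 statements merged into one kernel-verified Lean document; each statement's English description precedes it below -/
import Mathlib

section
/- In the skew-product setting, let m be a σ-ergodic measure on Ω and let b₁,b₂:Ω→ℝ be bounded m-measurable equilibria with b₁(ω)<b₂(ω) for m-a.e. ω∈Ω. Assume m({ω∈Ω : x↦𝔥(ω,x) is concave})=1 and m({ω∈Ω : 𝔥_x(ω,b₁(ω))>𝔥_x(ω,b₂(ω))})>0. Then ∫_Ω 𝔥_x(ω,b₁(ω))dm>0 and ∫_Ω 𝔥_x(ω,b₂(ω))dm<0. In particular, if m({ω : x↦𝔥(ω,x) is concave})=1 and every pair of bounded m-measurable equilibria c₁,c₂ with c₁<c₂ m-a.e. satisfies m({ω : 𝔥_x(ω,c₁(ω))>𝔥_x(ω,c₂(ω))})>0, then there do not exist three bounded m-measurable equilibria which are pairwise strictly ordered m-a.e. -/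
/-!
Strict order between two equilibria persists along every orbit (uniqueness for the Lipschitz
ODE), so `w = b₂ - b₁ > 0` and `t ↦ log w(ω·t)` has derivative `q(ω·t)`, where
`q ω = slope (H ω) (b₁ ω) (b₂ ω)` is bounded. A bounded derivative along the flow of a
measurable function has mean zero for any invariant measure, so `∫ q = 0`. Concavity of
`H ω` gives `Hx ω (b₂ ω) ≤ q ω ≤ Hx ω (b₁ ω)`, strictly on the set where the two derivatives
differ, which has positive measure. For three ordered equilibria the middle one would get both
a negative and a positive exponent.
-/

open Set Filter Topology MeasureTheory

/-- `σ` is a global continuous flow on `Ω`. -/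
def IsFlow {Ω : Type*} [TopologicalSpace Ω] (σ : ℝ → Ω → Ω) : Prop :=
  Continuous (fun p : ℝ × Ω => σ p.1 p.2) ∧ (∀ ω, σ 0 ω = ω) ∧
    ∀ s t : ℝ, ∀ ω, σ (s + t) ω = σ s (σ t ω)

/-- `m` is a `σ`-ergodic Borel probability measure on `Ω`. -/
def IsErgodicMeas {Ω : Type*} [MeasurableSpace Ω] (σ : ℝ → Ω → Ω)
    (m : MeasureTheory.Measure Ω) : Prop :=
  MeasureTheory.IsProbabilityMeasure m ∧
  (∀ t : ℝ, MeasureTheory.MeasurePreserving (σ t) m m) ∧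
  ∀ A : Set Ω, MeasurableSet A → (∀ t : ℝ, σ t ⁻¹' A = A) → m A = 0 ∨ m A = 1

/-- `b : Ω → ℝ` is an equilibrium for the skew-product flow induced by `H`:
for every `ω`, `t ↦ b(ω·t)` solves `x' = H(ω·t, x)`. -/
def IsEquilibrium {Ω : Type*} (σ : ℝ → Ω → Ω) (H : Ω → ℝ → ℝ) (b : Ω → ℝ) : Prop :=
  ∀ ω : Ω, ∀ t : ℝ, HasDerivAt (fun s => b (σ s ω)) (H (σ t ω) (b (σ t ω))) t

/-- `h` is concave. -/
def ConcaveFn (h : ℝ → ℝ) : Prop :=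
  ∀ x₁ x₂ α : ℝ, 0 ≤ α → α ≤ 1 →
    α * h x₁ + (1 - α) * h x₂ ≤ h (α * x₁ + (1 - α) * x₂)

/-- `ξ` solves `x' = h(t,x)` on the set `I`. -/
def IsSolOn (h : ℝ → ℝ → ℝ) (ξ : ℝ → ℝ) (I : Set ℝ) : Prop :=
  ∀ t ∈ I, HasDerivAt ξ (h t (ξ t)) t

/-- `ξ` is a globally defined bounded solution of `x' = h(t,x)`. -/
def IsBoundedSol (h : ℝ → ℝ → ℝ) (ξ : ℝ → ℝ) : Prop :=
  (∀ t : ℝ, HasDerivAt ξ (h t (ξ t)) t) ∧ ∃ C : ℝ, ∀ t : ℝ, |ξ t| ≤ C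

/-- Two globally defined functions are uniformly separated. -/
def UnifSep (b₁ b₂ : ℝ → ℝ) : Prop := ∃ d > 0, ∀ t : ℝ, d ≤ |b₁ t - b₂ t|

/-- `b` is a hyperbolic attractive solution of `x' = h(t,x)` (with `hx = h_x`). -/
def IsHypAttr (h hx : ℝ → ℝ → ℝ) (b : ℝ → ℝ) : Prop :=
  IsBoundedSol h b ∧ ∃ k ≥ (1:ℝ), ∃ γ > (0:ℝ), ∀ s t : ℝ, s ≤ t →
    Real.exp (∫ r in s..t, hx r (b r)) ≤ k * Real.exp (-γ * (t - s))

/-- `b` is a hyperbolic repulsive solution of `x' = h(t,x)` (with `hx = h_x`). -/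
def IsHypRep (h hx : ℝ → ℝ → ℝ) (b : ℝ → ℝ) : Prop :=
  IsBoundedSol h b ∧ ∃ k ≥ (1:ℝ), ∃ γ > (0:ℝ), ∀ s t : ℝ, t ≤ s →
    Real.exp (∫ r in s..t, hx r (b r)) ≤ k * Real.exp (γ * (t - s))

/-- `b` is a hyperbolic solution of `x' = h(t,x)`. -/
def IsHypSol (h hx : ℝ → ℝ → ℝ) (b : ℝ → ℝ) : Prop :=
  IsHypAttr h hx b ∨ IsHypRep h hx b

/-- `b` determines an attractive hyperbolic copy of the base over `S ⊆ Ω`. -/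
def AttrCopyOn {Ω : Type*} [TopologicalSpace Ω] (σ : ℝ → Ω → Ω) (H Hx : Ω → ℝ → ℝ)
    (S : Set Ω) (b : Ω → ℝ) : Prop :=
  ContinuousOn b S ∧
  (∀ ω ∈ S, ∀ t : ℝ, HasDerivAt (fun s => b (σ s ω)) (H (σ t ω) (b (σ t ω))) t) ∧
  ∃ k ≥ (1:ℝ), ∃ γ > (0:ℝ), ∀ ω ∈ S, ∀ t ≥ (0:ℝ),
    Real.exp (∫ s in (0:ℝ)..t, Hx (σ s ω) (b (σ s ω))) ≤ k * Real.exp (-γ * t)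

/-- `b` determines a repulsive hyperbolic copy of the base over `S ⊆ Ω`. -/
def RepCopyOn {Ω : Type*} [TopologicalSpace Ω] (σ : ℝ → Ω → Ω) (H Hx : Ω → ℝ → ℝ)
    (S : Set Ω) (b : Ω → ℝ) : Prop :=
  ContinuousOn b S ∧
  (∀ ω ∈ S, ∀ t : ℝ, HasDerivAt (fun s => b (σ s ω)) (H (σ t ω) (b (σ t ω))) t) ∧
  ∃ k ≥ (1:ℝ), ∃ γ > (0:ℝ), ∀ ω ∈ S, ∀ t ≤ (0:ℝ),
    Real.exp (∫ s in (0:ℝ)..t, Hx (σ s ω) (b (σ s ω))) ≤ k * Real.exp (γ * t)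

/-- `K` is a compact invariant subset of `Ω × ℝ` projecting onto `Ω`. -/
def InvCompactGraph {Ω : Type*} [TopologicalSpace Ω] (σ : ℝ → Ω → Ω) (H : Ω → ℝ → ℝ)
    (K : Set (Ω × ℝ)) : Prop :=
  IsCompact K ∧ (∀ ω : Ω, ∃ x : ℝ, (ω, x) ∈ K) ∧
  ∀ p ∈ K, ∃ ξ : ℝ → ℝ, ξ 0 = p.2 ∧
    (∀ t : ℝ, HasDerivAt ξ (H (σ t p.1) (ξ t)) t) ∧ ∀ t : ℝ, (σ t p.1, ξ t) ∈ K

/-- `K₁ < K₂` as subsets of `Ω × ℝ`. -/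
def OrderedSets {Ω : Type*} (K₁ K₂ : Set (Ω × ℝ)) : Prop :=
  ∀ (ω : Ω) (x₁ x₂ : ℝ), (ω, x₁) ∈ K₁ → (ω, x₂) ∈ K₂ → x₁ < x₂

open scoped NNReal

theorem ConcaveFn.concaveOn {f : ℝ → ℝ} (hf : ConcaveFn f) : ConcaveOn ℝ univ f := by
  refine ⟨convex_univ, fun x _ y _ a b ha hb hab => ?_⟩
  obtain rfl : b = 1 - a := by linarith
  simpa only [smul_eq_mul] using hf x y a ha (by linarith)

theorem isClosed_setOf_concaveFn {Ω : Type*} [TopologicalSpace Ω] {H : Ω → ℝ → ℝ}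
    (hH : ∀ x, Continuous fun ω => H ω x) : IsClosed {ω | ConcaveFn (H ω)} := by
  simp only [ConcaveFn, ofPred_forall]
  exact isClosed_iInter fun x₁ => isClosed_iInter fun x₂ => isClosed_iInter fun α =>
    isClosed_iInter fun _ => isClosed_iInter fun _ =>
      isClosed_le (by fun_prop) (hH _)

/-- By Darboux, `f'` takes the value `(f' x + f' y) / 2` at some `c ∈ (x, y)`, and
`slope f x y` averages the slopes over `[x, c]` and `[c, y]`. -/
theorem ConcaveOn.slope_mem_Ioo_of_hasDerivAt {f f' : ℝ → ℝ} (hf : ConcaveOn ℝ univ f)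
    (hf' : ∀ x, HasDerivAt f (f' x) x) {x y : ℝ} (hxy : x < y) (hlt : f' y < f' x) :
    slope f x y ∈ Ioo (f' y) (f' x) := by
  obtain ⟨c, ⟨hxc, hcy⟩, hc⟩ : (f' x + f' y) / 2 ∈ f' '' Ioo x y :=
    exists_hasDerivWithinAt_eq_of_lt_of_gt hxy.le (fun z _ => (hf' z).hasDerivWithinAt)
      (by linarith) (by linarith)
  have hxc₁ := hf.slope_le_of_hasDerivAt (mem_univ x) (mem_univ c) hxc (hf' x)
  have hxc₂ := hf.le_slope_of_hasDerivAt (mem_univ x) (mem_univ c) hxc (hf' c)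
  have hcy₁ := hf.slope_le_of_hasDerivAt (mem_univ c) (mem_univ y) hcy (hf' c)
  have hcy₂ := hf.le_slope_of_hasDerivAt (mem_univ c) (mem_univ y) hcy (hf' y)
  have hsplit : slope f x y * (y - x) = slope f x c * (c - x) + slope f c y * (y - c) := by
    simp only [slope_def_field]
    field_simp [(sub_pos.2 hxy).ne', (sub_pos.2 hxc).ne', (sub_pos.2 hcy).ne']
    ring
  constructor <;> nlinarith

theorem ODE_solution_lt_univ {v : ℝ → ℝ → ℝ} {s : ℝ → Set ℝ} {K : ℝ≥0}
    (hv : ∀ t, LipschitzOnWith K (v t) (s t)) {f g : ℝ → ℝ}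
    (hf : ∀ t, HasDerivAt f (v t (f t)) t ∧ f t ∈ s t)
    (hg : ∀ t, HasDerivAt g (v t (g t)) t ∧ g t ∈ s t) {t₀ : ℝ} (h₀ : f t₀ < g t₀) (t : ℝ) :
    f t < g t := by
  have hne : ∀ t, g t - f t ≠ 0 := fun t ht =>
    h₀.ne (congrFun (ODE_solution_unique_univ hv hf hg (sub_eq_zero.1 ht).symm) t₀)
  have hcont : Continuous fun t => g t - f t :=
    continuous_iff_continuousAt.2 fun t => ((hg t).1.sub (hf t).1).continuousAt
  by_contra! hle
  have h0 : (0 : ℝ) ∈ uIcc (g t - f t) (g t₀ - f t₀) :=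
    mem_uIcc.2 (Or.inl ⟨by linarith, by linarith⟩)
  obtain ⟨c, -, hc⟩ := intermediate_value_uIcc (a := t) (b := t₀) hcont.continuousOn h0
  exact hne c hc

/-- `g` itself need not be integrable, so we truncate it at height `n` and pass to the limit. -/
theorem MeasureTheory.MeasurePreserving.integral_comp_sub_eq_zero {Ω : Type*}
    [MeasurableSpace Ω] {μ : Measure Ω} [IsFiniteMeasure μ] {T : Ω → Ω}
    (hT : MeasurePreserving T μ μ) {g : Ω → ℝ} (hg : AEMeasurable g μ)
    (hint : Integrable (fun ω => g (T ω) - g ω) μ) :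
    ∫ ω, (g (T ω) - g ω) ∂μ = 0 := by
  let clamp : ℕ → ℝ → ℝ := fun n x => max (min x n) (-n)
  have hclamp_le : ∀ n x y, |clamp n x - clamp n y| ≤ |x - y| := fun n x y =>
    (abs_max_sub_max_le_abs _ _ _).trans <|
      (abs_min_sub_min_le_max _ _ _ _).trans (by simp)
  have hclamp_eq : ∀ x, ∀ᶠ n in atTop, clamp n x = x := fun x => by
    filter_upwards [eventually_ge_atTop ⌈|x|⌉₊] with n hn
    have hx : |x| ≤ n := (Nat.le_ceil _).trans (Nat.cast_le.2 hn)
    simp only [clamp, min_eq_left (abs_le.1 hx).2, max_eq_left (abs_le.1 hx).1]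
  have hclamp_meas : ∀ n, AEMeasurable (fun ω => clamp n (g ω)) μ := fun n =>
    (hg.min aemeasurable_const).max aemeasurable_const
  have hclamp_int : ∀ n, Integrable (fun ω => clamp n (g ω)) μ := fun n =>
    Integrable.of_bound (hclamp_meas n).aestronglyMeasurable n
      (Eventually.of_forall fun ω => by simp [clamp, abs_le])
  have hzero : ∀ n, ∫ ω, (clamp n (g (T ω)) - clamp n (g ω)) ∂μ = 0 := fun n => by
    have hclamp_int_comp : Integrable (fun ω => clamp n (g (T ω))) μ :=
      hT.integrable_comp_of_integrable (hclamp_int n)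
    have hshift : ∫ ω, clamp n (g (T ω)) ∂μ = ∫ ω, clamp n (g ω) ∂μ := by
      rw [← integral_map (f := fun ω => clamp n (g ω)) hT.aemeasurable
        (by rw [hT.map_eq]; exact (hclamp_meas n).aestronglyMeasurable), hT.map_eq]
    rw [integral_sub hclamp_int_comp (hclamp_int n), hshift, sub_self]
  have hlim := tendsto_integral_of_dominated_convergence
    (F := fun n ω => clamp n (g (T ω)) - clamp n (g ω)) (f := fun ω => g (T ω) - g ω)
    (fun ω => |g (T ω) - g ω|)
    (fun n => ((hclamp_meas n).comp_quasiMeasurePreserving hT.quasiMeasurePreserving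
      |>.sub (hclamp_meas n)).aestronglyMeasurable) hint.abs
    (fun n => Eventually.of_forall fun ω => hclamp_le n _ _)
    (Eventually.of_forall fun ω => tendsto_const_nhds.congr'
      (((hclamp_eq (g (T ω))).and (hclamp_eq (g ω))).mono fun n h => by simp only [h.1, h.2]))
  simp only [hzero] at hlim
  exact tendsto_nhds_unique hlim tendsto_const_nhds

theorem integral_eq_zero_of_hasDerivAt_comp_flow {Ω : Type*} [MeasurableSpace Ω]
    {μ : Measure Ω} [IsFiniteMeasure μ] {σ : ℝ → Ω → Ω} (hσ₀ : ∀ ω, σ 0 ω = ω)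
    (hσ : ∀ t, MeasurePreserving (σ t) μ μ) {g q : Ω → ℝ} (hg : AEMeasurable g μ) {M : ℝ}
    (hderiv : ∀ᵐ ω ∂μ, ∀ t, HasDerivAt (fun s => g (σ s ω)) (q (σ t ω)) t)
    (hbound : ∀ᵐ ω ∂μ, ∀ t, |q (σ t ω)| ≤ M) :
    ∫ ω, q ω ∂μ = 0 := by
  have hlip : ∀ᵐ ω ∂μ, ∀ t, |g (σ t ω) - g ω| ≤ M * |t| := by
    filter_upwards [hderiv, hbound] with ω hd hb t
    simpa [hσ₀] using convex_univ.norm_image_sub_le_of_norm_hasDerivWithin_le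
      (fun s _ => (hd s).hasDerivWithinAt) (fun s _ => hb s) (mem_univ 0) (mem_univ t)
  have hcomp_meas : ∀ t, AEMeasurable (fun ω => g (σ t ω) - g ω) μ := fun t =>
    (hg.comp_quasiMeasurePreserving (hσ t).quasiMeasurePreserving).sub hg
  have hzero : ∀ t, ∫ ω, (g (σ t ω) - g ω) ∂μ = 0 := fun t =>
    (hσ t).integral_comp_sub_eq_zero hg <| Integrable.of_bound (hcomp_meas t).aestronglyMeasurable
      (M * |t|) (hlip.mono fun ω h => h t)
  let τ : ℕ → ℝ := fun n => 1 / ((n : ℝ) + 1)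
  have hτ_pos : ∀ n, 0 < τ n := fun n => by positivity
  have hτ : Tendsto τ atTop (𝓝[>] 0) :=
    tendsto_nhdsWithin_of_tendsto_nhds_of_eventually_within _
      tendsto_one_div_add_atTop_nhds_zero_nat (Eventually.of_forall hτ_pos)
  have hlim := tendsto_integral_of_dominated_convergence
    (F := fun n ω => (τ n)⁻¹ * (g (σ (τ n) ω) - g ω)) (f := q) (fun _ => M)
    (fun n => ((hcomp_meas (τ n)).const_mul _).aestronglyMeasurable) (integrable_const M)
    (fun n => hlip.mono fun ω h => by
      rw [norm_mul, norm_inv, Real.norm_eq_abs, Real.norm_eq_abs, abs_of_pos (hτ_pos n),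
        inv_mul_le_iff₀ (hτ_pos n), mul_comm]
      simpa [abs_of_pos (hτ_pos n)] using h (τ n))
    (hderiv.mono fun ω h => by
      simpa [hσ₀, Function.comp_def] using (h 0).tendsto_slope_zero_right.comp hτ)
  simp only [integral_const_mul, hzero, mul_zero] at hlim
  exact tendsto_nhds_unique hlim tendsto_const_nhds

theorem MeasureTheory.integral_lt_integral_of_ae_le_of_measure_pos {α : Type*}
    [MeasurableSpace α] {μ : Measure α} {f g : α → ℝ} (hf : Integrable f μ)
    (hg : Integrable g μ) (hle : f ≤ᵐ[μ] g) {s : Set α} (hs : 0 < μ s)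
    (hlt : ∀ᵐ x ∂μ, x ∈ s → f x < g x) :
    ∫ x, f x ∂μ < ∫ x, g x ∂μ := by
  rw [← sub_pos, ← integral_sub hg hf]
  refine (integral_pos_iff_support_of_nonneg_ae (hle.mono fun x h => sub_nonneg.2 h)
    (hg.sub hf)).2 (hs.trans_le (measure_mono_ae ?_))
  filter_upwards [hlt] with x hx hxs
  exact (sub_pos.2 (hx hxs)).ne'

theorem Continuous.integrable_comp_of_bounded {Ω : Type*} [TopologicalSpace Ω] [CompactSpace Ω]
    [MeasurableSpace Ω] [OpensMeasurableSpace Ω] {μ : Measure Ω} [IsFiniteMeasure μ]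
    {F : Ω → ℝ → ℝ} (hF : Continuous fun p : Ω × ℝ => F p.1 p.2) {b : Ω → ℝ}
    (hb : AEMeasurable b μ) {C : ℝ} (hC : ∀ ω, |b ω| ≤ C) :
    Integrable (fun ω => F ω (b ω)) μ := by
  obtain ⟨M, hM⟩ := (isCompact_univ.prod (isCompact_Icc (a := -C) (b := C)))
    |>.exists_bound_of_continuousOn hF.continuousOn
  exact Integrable.of_bound (hF.aemeasurable2 aemeasurable_id hb).aestronglyMeasurable M
    (Eventually.of_forall fun ω => hM (ω, b ω) ⟨mem_univ ω, abs_le.1 (hC ω)⟩)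

theorem integral_slope_eq_zero_of_isEquilibrium {Ω : Type*} [TopologicalSpace Ω]
    [CompactSpace Ω] [MeasurableSpace Ω] [OpensMeasurableSpace Ω] {σ : ℝ → Ω → Ω}
    (hσ₀ : ∀ ω, σ 0 ω = ω) {m : Measure Ω} [IsFiniteMeasure m]
    (hσ : ∀ t, MeasurePreserving (σ t) m m) {H Hx : Ω → ℝ → ℝ}
    (hHc : Continuous fun p : Ω × ℝ => H p.1 p.2)
    (hHxc : Continuous fun p : Ω × ℝ => Hx p.1 p.2) (hder : ∀ ω x, HasDerivAt (H ω) (Hx ω x) x)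
    {b₁ b₂ : Ω → ℝ} (hm₁ : AEMeasurable b₁ m) (hm₂ : AEMeasurable b₂ m) {C : ℝ}
    (hC₁ : ∀ ω, b₁ ω ∈ Icc (-C) C) (hC₂ : ∀ ω, b₂ ω ∈ Icc (-C) C)
    (heq₁ : IsEquilibrium σ H b₁) (heq₂ : IsEquilibrium σ H b₂) (hlt : ∀ᵐ ω ∂m, b₁ ω < b₂ ω) :
    Integrable (fun ω => slope (H ω) (b₁ ω) (b₂ ω)) m ∧
      ∫ ω, slope (H ω) (b₁ ω) (b₂ ω) ∂m = 0 := by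
  obtain ⟨M, hM⟩ : ∃ M : ℝ≥0, ∀ θ, ∀ x ∈ Icc (-C) C, ‖Hx θ x‖₊ ≤ M := by
    obtain ⟨M, hM⟩ := (isCompact_univ.prod isCompact_Icc).exists_bound_of_continuousOn
      hHxc.continuousOn
    refine ⟨M.toNNReal, fun θ x hx => ?_⟩
    rw [← NNReal.coe_le_coe, coe_nnnorm]
    exact (hM (θ, x) ⟨mem_univ θ, hx⟩).trans (Real.le_coe_toNNReal M)
  have hlip : ∀ θ, LipschitzOnWith M (H θ) (Icc (-C) C) := fun θ =>
    (convex_Icc _ _).lipschitzOnWith_of_nnnorm_hasDerivWithin_le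
      (fun x _ => (hder θ x).hasDerivWithinAt) (hM θ)
  have hslope_le : ∀ θ, b₁ θ < b₂ θ → |slope (H θ) (b₁ θ) (b₂ θ)| ≤ M := fun θ h => by
    rw [slope_def_field, abs_div, div_le_iff₀ (abs_pos.2 (sub_pos.2 h).ne')]
    simpa [Real.dist_eq] using (hlip θ).dist_le_mul _ (hC₂ θ) _ (hC₁ θ)
  have horbit : ∀ ω, b₁ ω < b₂ ω → ∀ t, b₁ (σ t ω) < b₂ (σ t ω) := fun ω h =>
    ODE_solution_lt_univ (v := fun t => H (σ t ω)) (fun t => hlip _)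
      (fun t => ⟨heq₁ ω t, hC₁ _⟩) (fun t => ⟨heq₂ ω t, hC₂ _⟩) (t₀ := 0)
      (by simpa only [hσ₀] using h)
  have hmeas : AEMeasurable (fun ω => slope (H ω) (b₁ ω) (b₂ ω)) m := by
    simp only [slope_def_field]
    exact ((hHc.aemeasurable2 aemeasurable_id hm₂).sub
      (hHc.aemeasurable2 aemeasurable_id hm₁)).div (hm₂.sub hm₁)
  refine ⟨Integrable.of_bound hmeas.aestronglyMeasurable M (hlt.mono hslope_le), ?_⟩
  refine integral_eq_zero_of_hasDerivAt_comp_flow hσ₀ hσ (g := fun θ => Real.log (b₂ θ - b₁ θ))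
    (Real.measurable_log.comp_aemeasurable (hm₂.sub hm₁)) (M := M) ?_ ?_
  · filter_upwards [hlt] with ω h t
    simpa only [slope_def_field, Pi.sub_apply] using
      ((heq₂ ω t).sub (heq₁ ω t)).log (sub_pos.2 (horbit ω h t)).ne'
  · filter_upwards [hlt] with ω h t using hslope_le _ (horbit ω h t)

theorem integral_pos_and_integral_neg_of_isEquilibrium {Ω : Type*} [TopologicalSpace Ω]
    [CompactSpace Ω] [MeasurableSpace Ω] [OpensMeasurableSpace Ω] {σ : ℝ → Ω → Ω}
    (hσ₀ : ∀ ω, σ 0 ω = ω) {m : Measure Ω} [IsFiniteMeasure m]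
    (hσ : ∀ t, MeasurePreserving (σ t) m m) {H Hx : Ω → ℝ → ℝ}
    (hHc : Continuous fun p : Ω × ℝ => H p.1 p.2)
    (hHxc : Continuous fun p : Ω × ℝ => Hx p.1 p.2) (hder : ∀ ω x, HasDerivAt (H ω) (Hx ω x) x)
    {b₁ b₂ : Ω → ℝ} (hm₁ : AEMeasurable b₁ m) (hm₂ : AEMeasurable b₂ m)
    (hbd₁ : ∃ C, ∀ ω, |b₁ ω| ≤ C) (hbd₂ : ∃ C, ∀ ω, |b₂ ω| ≤ C)
    (heq₁ : IsEquilibrium σ H b₁) (heq₂ : IsEquilibrium σ H b₂) (hlt : ∀ᵐ ω ∂m, b₁ ω < b₂ ω)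
    (hconc : ∀ᵐ ω ∂m, ConcaveFn (H ω)) (hpos : 0 < m {ω | Hx ω (b₂ ω) < Hx ω (b₁ ω)}) :
    (0 < ∫ ω, Hx ω (b₁ ω) ∂m) ∧ (∫ ω, Hx ω (b₂ ω) ∂m) < 0 := by
  obtain ⟨C₁, hC₁⟩ := hbd₁
  obtain ⟨C₂, hC₂⟩ := hbd₂
  have hC₁' : ∀ ω, |b₁ ω| ≤ max C₁ C₂ := fun ω => (hC₁ ω).trans (le_max_left _ _)
  have hC₂' : ∀ ω, |b₂ ω| ≤ max C₁ C₂ := fun ω => (hC₂ ω).trans (le_max_right _ _)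
  obtain ⟨hq_int, hq_zero⟩ := integral_slope_eq_zero_of_isEquilibrium hσ₀ hσ hHc hHxc hder
    hm₁ hm₂ (fun ω => abs_le.1 (hC₁' ω)) (fun ω => abs_le.1 (hC₂' ω)) heq₁ heq₂ hlt
  have hslope : ∀ᵐ ω ∂m, Hx ω (b₂ ω) ≤ slope (H ω) (b₁ ω) (b₂ ω) ∧
      slope (H ω) (b₁ ω) (b₂ ω) ≤ Hx ω (b₁ ω) := by
    filter_upwards [hlt, hconc] with ω h hc
    exact ⟨hc.concaveOn.le_slope_of_hasDerivAt (mem_univ _) (mem_univ _) h (hder ω _),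
      hc.concaveOn.slope_le_of_hasDerivAt (mem_univ _) (mem_univ _) h (hder ω _)⟩
  have hslope_strict : ∀ᵐ ω ∂m, ω ∈ {ω | Hx ω (b₂ ω) < Hx ω (b₁ ω)} →
      slope (H ω) (b₁ ω) (b₂ ω) ∈ Ioo (Hx ω (b₂ ω)) (Hx ω (b₁ ω)) := by
    filter_upwards [hlt, hconc] with ω h hc hHx
    exact hc.concaveOn.slope_mem_Ioo_of_hasDerivAt (hder ω) h hHx
  constructor
  · rw [← hq_zero]
    exact integral_lt_integral_of_ae_le_of_measure_pos hq_int
      (hHxc.integrable_comp_of_bounded hm₁ hC₁) (hslope.mono fun ω h => h.2) hpos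
      (hslope_strict.mono fun ω h hω => (h hω).2)
  · rw [← hq_zero]
    exact integral_lt_integral_of_ae_le_of_measure_pos
      (hHxc.integrable_comp_of_bounded hm₂ hC₂) hq_int (hslope.mono fun ω h => h.1) hpos
      (hslope_strict.mono fun ω h hω => (h hω).1)

/-- Two ordered bounded measurable equilibria for a concave skew-product flow produce
Lyapunov exponents of opposite signs; in particular there are at most two bounded
measurable equilibria strictly ordered almost everywhere. -/
theorem stmt8 {Ω : Type*} [MetricSpace Ω] [CompactSpace Ω]
    [MeasurableSpace Ω] [BorelSpace Ω]
    (σ : ℝ → Ω → Ω) (hσ : IsFlow σ)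
    (H Hx : Ω → ℝ → ℝ)
    (hHc : Continuous fun p : Ω × ℝ => H p.1 p.2)
    (hHxc : Continuous fun p : Ω × ℝ => Hx p.1 p.2)
    (hder : ∀ ω x, HasDerivAt (H ω) (Hx ω x) x)
    (m : MeasureTheory.Measure Ω) (herg : IsErgodicMeas σ m) :
    (∀ b₁ b₂ : Ω → ℝ, AEMeasurable b₁ m → AEMeasurable b₂ m →
      (∃ C, ∀ ω, |b₁ ω| ≤ C) → (∃ C, ∀ ω, |b₂ ω| ≤ C) →
      IsEquilibrium σ H b₁ → IsEquilibrium σ H b₂ →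
      (∀ᵐ ω ∂m, b₁ ω < b₂ ω) →
      m {ω | ConcaveFn (H ω)} = 1 →
      0 < m {ω | Hx ω (b₂ ω) < Hx ω (b₁ ω)} →
      (0 < ∫ ω, Hx ω (b₁ ω) ∂m) ∧ (∫ ω, Hx ω (b₂ ω) ∂m) < 0) ∧
    (m {ω | ConcaveFn (H ω)} = 1 →
      (∀ c₁ c₂ : Ω → ℝ, AEMeasurable c₁ m → AEMeasurable c₂ m →
        (∃ C, ∀ ω, |c₁ ω| ≤ C) → (∃ C, ∀ ω, |c₂ ω| ≤ C) →
        IsEquilibrium σ H c₁ → IsEquilibrium σ H c₂ →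
        (∀ᵐ ω ∂m, c₁ ω < c₂ ω) →
        0 < m {ω | Hx ω (c₂ ω) < Hx ω (c₁ ω)}) →
      ¬ ∃ c₁ c₂ c₃ : Ω → ℝ,
          AEMeasurable c₁ m ∧ AEMeasurable c₂ m ∧ AEMeasurable c₃ m ∧
          (∃ C, ∀ ω, |c₁ ω| ≤ C) ∧ (∃ C, ∀ ω, |c₂ ω| ≤ C) ∧ (∃ C, ∀ ω, |c₃ ω| ≤ C) ∧
          IsEquilibrium σ H c₁ ∧ IsEquilibrium σ H c₂ ∧ IsEquilibrium σ H c₃ ∧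
          (∀ᵐ ω ∂m, c₁ ω < c₂ ω ∧ c₂ ω < c₃ ω)) := by
  obtain ⟨hprob, hσm, -⟩ := herg
  have hσ₀ : ∀ ω, σ 0 ω = ω := hσ.2.1
  have hconc_ae : m {ω | ConcaveFn (H ω)} = 1 → ∀ᵐ ω ∂m, ConcaveFn (H ω) := fun h =>
    (ae_iff_measure_eq (isClosed_setOf_concaveFn fun x =>
      hHc.comp (continuous_id.prodMk continuous_const)).measurableSet.nullMeasurableSet).2
      (h.trans measure_univ.symm)
  refine ⟨fun b₁ b₂ hm₁ hm₂ hbd₁ hbd₂ heq₁ heq₂ hlt hconc hpos =>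
    integral_pos_and_integral_neg_of_isEquilibrium hσ₀ hσm hHc hHxc hder hm₁ hm₂ hbd₁ hbd₂
      heq₁ heq₂ hlt (hconc_ae hconc) hpos, ?_⟩
  rintro hconc hpairs ⟨c₁, c₂, c₃, hm₁, hm₂, hm₃, hbd₁, hbd₂, hbd₃, heq₁, heq₂, heq₃, hord⟩
  have hlt₁₂ : ∀ᵐ ω ∂m, c₁ ω < c₂ ω := hord.mono fun _ h => h.1
  have hlt₂₃ : ∀ᵐ ω ∂m, c₂ ω < c₃ ω := hord.mono fun _ h => h.2
  have h₁₂ := integral_pos_and_integral_neg_of_isEquilibrium hσ₀ hσm hHc hHxc hder hm₁ hm₂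
    hbd₁ hbd₂ heq₁ heq₂ hlt₁₂ (hconc_ae hconc) (hpairs c₁ c₂ hm₁ hm₂ hbd₁ hbd₂ heq₁ heq₂ hlt₁₂)
  have h₂₃ := integral_pos_and_integral_neg_of_isEquilibrium hσ₀ hσm hHc hHxc hder hm₂ hm₃
    hbd₂ hbd₃ heq₂ heq₃ hlt₂₃ (hconc_ae hconc) (hpairs c₂ c₃ hm₂ hm₃ hbd₂ hbd₃ heq₂ heq₃ hlt₂₃)
  linarith [h₁₂.2, h₂₃.1]
end

section
/- In the skew-product setting with 𝔥, 𝔥_x and 𝔥_xx continuous on Ω×ℝ, let m be a σ-ergodic measure and let b₁,b₂,b₃:Ω→ℝ be bounded m-measurable equilibria with b₁(ω)<b₂(ω)<b₃(ω) for m-a.e. ω∈Ω. Assume m({ω : x↦𝔥_x(ω,x) is concave})=1 and m({ω : 𝔥_xx(ω,b₁(ω))>𝔥_xx(ω,b₃(ω))})>0. Then ∫_Ω 𝔥_x(ω,b₂(ω))dm>0 and ∫_Ω 𝔥_x(ω,bᵢ(ω))dm<0 for i=1 and i=3. In particular, if m({ω : x↦𝔥_x(ω,x) is concave})=1 and every triple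 of bounded m-measurable equilibria c₁<c₂<c₃ (m-a.e.) satisfies m({ω : 𝔥_xx(ω,c₁(ω))>𝔥_xx(ω,c₃(ω))})>0, then there do not exist four bounded m-measurable equilibria which are pairwise strictly ordered m-a.e. -/
open Set Filter Topology MeasureTheory

/-!
For equilibria `p` and `q`, the slope `(𝔥(ω, q ω) - 𝔥(ω, p ω)) / (q ω - p ω)` is the derivative
of `log |q - p|` along the orbits, so by invariance of `m` it has zero mean. For `b₁ < b₂ < b₃`,
write `Qᵢⱼ` for the slope between `bᵢ` and `bⱼ`. Concavity of `𝔥_x(ω, ·)` gives pointwise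
`Q₁₂ + Q₂₃ - Q₁₃ ≤ 𝔥_x(b₂)`, strictly where `𝔥_xx(b₃) < 𝔥_xx(b₁)`, and the Hermite–Hadamard
inequality `𝔥_x(bᵢ) + 𝔥_x(bⱼ) ≤ 2 Qᵢⱼ`. Integrating, `∫ 𝔥_x(b₂) > 0`, hence `∫ 𝔥_x(b₁) < 0` and
`∫ 𝔥_x(b₃) < 0`. Of four ordered equilibria, the third would be the outer one of the first triple
and the middle one of the last.
-/

section ConcaveFn

variable {g G : ℝ → ℝ} {a b c : ℝ}

theorem slope_eq_intervalIntegral (hG : ∀ x, HasDerivAt G (g x) x) (hg : Continuous g)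
    (hab : a ≠ b) : slope G a b = ∫ r in (0:ℝ)..1, g (a + (b - a) * r) := by
  have hsub : ∫ x in a..b, g x = G b - G a :=
    intervalIntegral.integral_eq_sub_of_hasDerivAt (fun x _ => hG x) (hg.intervalIntegrable _ _)
  have hscale := intervalIntegral.mul_integral_comp_add_mul (f := g) (a := 0) (b := 1)
    (c := b - a) (d := a)
  rw [mul_zero, add_zero, mul_one, add_sub_cancel, hsub] at hscale
  rw [slope_def_field, ← hscale, mul_div_cancel_left₀ _ (sub_ne_zero.2 hab.symm)]

theorem abs_slope_le_of_abs_deriv_le {f f' : ℝ → ℝ} {s : Set ℝ} (hs : Convex ℝ s)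
    (hf : ∀ x, HasDerivAt f (f' x) x) {M : ℝ} (hM : ∀ x ∈ s, |f' x| ≤ M) {x y : ℝ} (hx : x ∈ s)
    (hy : y ∈ s) : |slope f x y| ≤ M := by
  rw [slope_def_field, abs_div]
  refine div_le_of_le_mul₀ (abs_nonneg _) ((abs_nonneg _).trans (hM x hx)) ?_
  simpa only [Real.norm_eq_abs] using
    hs.norm_image_sub_le_of_norm_hasDerivWithin_le (fun z _ => (hf z).hasDerivWithinAt) hM hx hy

theorem ConcaveFn.mul_add_mul_le (hg : ConcaveFn g) {p q x y : ℝ} (hp : 0 ≤ p) (hq : 0 ≤ q)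
    (hpq : 0 < p + q) : p * g x + q * g y ≤ (p + q) * g ((p * x + q * y) / (p + q)) := by
  have h := hg x y (p / (p + q)) (by positivity) ((div_le_one hpq).2 (by linarith))
  have hq' : 1 - p / (p + q) = q / (p + q) := by field_simp; ring
  have harg : p / (p + q) * x + q / (p + q) * y = (p * x + q * y) / (p + q) := by field_simp
  rw [hq', harg] at h
  calc p * g x + q * g y = (p + q) * (p / (p + q) * g x + q / (p + q) * g y) := by field_simp
    _ ≤ _ := mul_le_mul_of_nonneg_left h hpq.le

theorem ConcaveFn.add_le_two_mul_slope (hg : ConcaveFn g) (hG : ∀ x, HasDerivAt G (g x) x)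
    (hgc : Continuous g) (hab : a ≠ b) : g a + g b ≤ 2 * slope G a b := by
  have hchord : ∫ r in (0:ℝ)..1, ((1 - r) * g a + r * g b) ≤
      ∫ r in (0:ℝ)..1, g (a + (b - a) * r) := by
    refine intervalIntegral.integral_mono_on zero_le_one
      (Continuous.intervalIntegrable (by fun_prop) _ _)
      ((hgc.comp (by fun_prop)).intervalIntegrable _ _) fun r ⟨h0, h1⟩ => ?_
    convert hg a b (1 - r) (by linarith) (by linarith) using 2 <;> ring
  have hmean : ∫ r in (0:ℝ)..1, ((1 - r) * g a + r * g b) = (g a + g b) / 2 := by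
    rw [intervalIntegral.integral_add (Continuous.intervalIntegrable (by fun_prop) _ _)
      (Continuous.intervalIntegrable (by fun_prop) _ _), intervalIntegral.integral_mul_const,
      intervalIntegral.integral_mul_const, intervalIntegral.integral_sub intervalIntegrable_const
      intervalIntegral.intervalIntegrable_id]
    norm_num
    ring
  rw [slope_eq_intervalIntegral hG hgc hab]
  linarith

theorem ConcaveFn.sub_mul_add_sub_mul_le (hg : ConcaveFn g) (hab : a < b) (hbc : b < c) (r : ℝ) :
    (c - b) * g (b + (a - b) * r) + (b - a) * g (b + (c - b) * r) ≤ (c - a) * g b := by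
  have h := hg.mul_add_mul_le (x := b + (a - b) * r) (y := b + (c - b) * r)
    (sub_nonneg.2 hbc.le) (sub_nonneg.2 hab.le) (by linarith)
  have hca : c - b + (b - a) = c - a := by ring
  rwa [hca, show ((c - b) * (b + (a - b) * r) + (b - a) * (b + (c - b) * r)) / (c - a) = b by
    field_simp [(sub_pos.2 (hab.trans hbc)).ne']; ring] at h

theorem mul_slope_add_slope_sub_slope_eq_integral (hG : ∀ x, HasDerivAt G (g x) x)
    (hgc : Continuous g) (hab : a < b) (hbc : b < c) :
    (c - a) * (slope G a b + slope G b c - slope G a c) =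
      ∫ r in (0:ℝ)..1, ((c - b) * g (b + (a - b) * r) + (b - a) * g (b + (c - b) * r)) := by
  have hab' := sub_smul_slope G a b
  have hbc' := sub_smul_slope G b c
  have hac' := sub_smul_slope G a c
  simp only [smul_eq_mul, vsub_eq_sub] at hab' hbc' hac'
  have hI₁ : IntervalIntegrable (fun r => g (b + (a - b) * r)) volume 0 1 :=
    (hgc.comp (by fun_prop)).intervalIntegrable _ _
  have hI₂ : IntervalIntegrable (fun r => g (b + (c - b) * r)) volume 0 1 :=
    (hgc.comp (by fun_prop)).intervalIntegrable _ _
  rw [intervalIntegral.integral_add (hI₁.const_mul _) (hI₂.const_mul _),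
    intervalIntegral.integral_const_mul, intervalIntegral.integral_const_mul,
    ← slope_eq_intervalIntegral hG hgc hab.ne', ← slope_eq_intervalIntegral hG hgc hbc.ne,
    slope_comm G b a]
  linear_combination hab' + hbc' - hac'

theorem ConcaveFn.slope_add_slope_sub_slope_le (hg : ConcaveFn g)
    (hG : ∀ x, HasDerivAt G (g x) x) (hgc : Continuous g) (hab : a < b) (hbc : b < c) :
    slope G a b + slope G b c - slope G a c ≤ g b := by
  refine le_of_mul_le_mul_left ?_ (sub_pos.2 (hab.trans hbc))
  rw [mul_slope_add_slope_sub_slope_eq_integral hG hgc hab hbc]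
  calc _ ≤ ∫ _ in (0:ℝ)..1, (c - a) * g b :=
        intervalIntegral.integral_mono_on zero_le_one
          (Continuous.intervalIntegrable (by fun_prop) _ _) intervalIntegrable_const
          fun r _ => hg.sub_mul_add_sub_mul_le hab hbc r
    _ = (c - a) * g b := by simp

/-- Equality would force `r ↦ (c - b) g(b + (a - b) r) + (b - a) g(b + (c - b) r)` to be
constant on `[0, 1]`, so its one-sided derivative `(b - a)(c - b)(g'(c) - g'(a))` at `1` would
vanish. -/
theorem ConcaveFn.slope_add_slope_sub_slope_lt (hg : ConcaveFn g)
    (hG : ∀ x, HasDerivAt G (g x) x) (hgc : Continuous g) (hab : a < b) (hbc : b < c)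
    {da dc : ℝ} (hda : HasDerivAt g da a) (hdc : HasDerivAt g dc c) (hlt : dc < da) :
    slope G a b + slope G b c - slope G a c < g b := by
  refine (hg.slope_add_slope_sub_slope_le hG hgc hab hbc).lt_of_ne fun heq => hlt.ne ?_
  set φ : ℝ → ℝ := fun r => (c - b) * g (b + (a - b) * r) + (b - a) * g (b + (c - b) * r)
  have hφc : Continuous φ := by fun_prop
  have hgap : ∫ r in (0:ℝ)..1, ((c - a) * g b - φ r) = 0 := by
    rw [intervalIntegral.integral_sub intervalIntegrable_const (hφc.intervalIntegrable _ _),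
      ← mul_slope_add_slope_sub_slope_eq_integral hG hgc hab hbc, heq]
    simp
  have hae := (intervalIntegral.integral_eq_zero_iff_of_nonneg_ae
    (ae_of_all _ fun r => sub_nonneg.2 (hg.sub_mul_add_sub_mul_le hab hbc r))
    (Continuous.intervalIntegrable (by fun_prop) _ _)).1 hgap
  rw [Ioc_eq_empty_of_le zero_le_one, union_empty] at hae
  have hconst : EqOn φ (fun _ => (c - a) * g b) (Ioc 0 1) := fun r hr => (sub_eq_zero.1
    (Measure.eqOn_Ioc_of_ae_eq (μ := volume) hae (by fun_prop) continuousOn_const hr)).symm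
  have hφ' : HasDerivAt φ ((c - b) * (da * (a - b)) + (b - a) * (dc * (c - b))) 1 := by
    have ha : HasDerivAt g da (b + (a - b) * 1) := by rwa [mul_one, add_sub_cancel]
    have hc : HasDerivAt g dc (b + (c - b) * 1) := by rwa [mul_one, add_sub_cancel]
    refine ((ha.comp 1 ?_).const_mul _).add ((hc.comp 1 ?_).const_mul _) <;>
      simpa using ((hasDerivAt_id (1:ℝ)).const_mul _).const_add b
  have hzero := (uniqueDiffOn_Ioc 0 1 1 ⟨one_pos, le_rfl⟩).eq_deriv _ hφ'.hasDerivWithinAt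
    ((hasDerivWithinAt_const 1 _ ((c - a) * g b)).congr hconst (hconst ⟨one_pos, le_rfl⟩))
  have hprod : (b - a) * (c - b) * (dc - da) = 0 := by linear_combination hzero
  exact sub_eq_zero.1 ((mul_eq_zero.1 hprod).resolve_left
    (mul_pos (sub_pos.2 hab) (sub_pos.2 hbc)).ne')

end ConcaveFn

section Flow

variable {Ω : Type*} [MeasurableSpace Ω] {σ : ℝ → Ω → Ω} {m : Measure Ω}

/-- `t ↦ ∫ F (σ t ω) dm` is constant, and its derivative at `0` is `∫ f dm`. -/
theorem integral_eq_zero_of_hasDerivAt_comp_flow_s17 [IsFiniteMeasure m] (hσ₀ : ∀ ω, σ 0 ω = ω)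
    (hpres : ∀ t, MeasurePreserving (σ t) m m) {F f : Ω → ℝ} (hF : Integrable F m)
    (hf : AEStronglyMeasurable f m) {M : ℝ} (hfM : ∀ ω, |f ω| ≤ M)
    (hderiv : ∀ ω t, HasDerivAt (fun s => F (σ s ω)) (f (σ t ω)) t) : ∫ ω, f ω ∂m = 0 := by
  have hconst : (fun t => ∫ ω, F (σ t ω) ∂m) = fun _ => ∫ ω, F ω ∂m := by
    ext t
    rw [← integral_map (hpres t).measurable.aemeasurable
      (by rw [(hpres t).map_eq]; exact hF.aestronglyMeasurable), (hpres t).map_eq]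
  have hd := (hasDerivAt_integral_of_dominated_loc_of_deriv_le (x₀ := 0) univ_mem
    (F := fun t ω => F (σ t ω)) (F' := fun t ω => f (σ t ω)) (bound := fun _ => M)
    (Eventually.of_forall fun t => hF.aestronglyMeasurable.comp_measurePreserving (hpres t))
    (by simpa only [hσ₀] using hF) (by simpa only [hσ₀] using hf)
    (ae_of_all _ fun ω t _ => hfM _) (integrable_const M)
    (ae_of_all _ fun ω t _ => hderiv ω t)).2
  simp only [hconst, hσ₀] at hd
  exact hd.unique (hasDerivAt_const 0 _)

variable {H : Ω → ℝ → ℝ} {p q : Ω → ℝ}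

theorem AEMeasurable.slope_comp (hH : Measurable (Function.uncurry H)) (hp : AEMeasurable p m)
    (hq : AEMeasurable q m) : AEMeasurable (fun ω => slope (H ω) (p ω) (q ω)) m := by
  simp only [slope_def_field]
  exact ((hH.comp_aemeasurable (aemeasurable_id.prodMk hq)).sub
    (hH.comp_aemeasurable (aemeasurable_id.prodMk hp))).div (hq.sub hp)

/-- `log |q - p|`, whose derivative along orbits is the slope, is regularized to
`log ((q - p)² + ε²) / 2`, and `ε → 0` by dominated convergence. -/
theorem integral_slope_eq_zero [IsFiniteMeasure m] (hσ₀ : ∀ ω, σ 0 ω = ω)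
    (hpres : ∀ t, MeasurePreserving (σ t) m m)
    (hH : Measurable (Function.uncurry H)) (hp : AEMeasurable p m) (hq : AEMeasurable q m)
    {C M : ℝ} (hpC : ∀ ω, |p ω| ≤ C) (hqC : ∀ ω, |q ω| ≤ C)
    (hpe : IsEquilibrium σ H p) (hqe : IsEquilibrium σ H q)
    (hslope : ∀ ω, |slope (H ω) (p ω) (q ω)| ≤ M) :
    ∫ ω, slope (H ω) (p ω) (q ω) ∂m = 0 := by
  set v : Ω → ℝ := fun ω => q ω - p ω
  set Q : Ω → ℝ := fun ω => slope (H ω) (p ω) (q ω) with hQ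
  have hvm : AEMeasurable v m := hq.sub hp
  have hQm : AEMeasurable Q m := hp.slope_comp hH hq
  have hvC : ∀ ω, |v ω| ≤ 2 * C := fun ω => (abs_sub _ _).trans (by linarith [hpC ω, hqC ω])
  have hreg_le : ∀ ε ω, |v ω ^ 2 / (v ω ^ 2 + ε ^ 2) * Q ω| ≤ M := fun ε ω => by
    rw [abs_mul, abs_of_nonneg (by positivity)]
    exact (mul_le_of_le_one_left (abs_nonneg _) (div_le_one_of_le₀ (by nlinarith)
      (by positivity))).trans (hslope ω)
  have hreg : ∀ ε > 0, ∫ ω, v ω ^ 2 / (v ω ^ 2 + ε ^ 2) * Q ω ∂m = 0 := by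
    intro ε hε
    have hpos : ∀ x : ℝ, 0 < x ^ 2 + ε ^ 2 := fun x => by positivity
    have hlog : Continuous fun x : ℝ => Real.log (x ^ 2 + ε ^ 2) / 2 :=
      (((continuous_id.pow 2).add continuous_const).log fun x => (hpos x).ne').div_const 2
    obtain ⟨K, hK⟩ := (isCompact_Icc (a := -(2 * C)) (b := 2 * C)).exists_bound_of_continuousOn
      hlog.continuousOn
    refine integral_eq_zero_of_hasDerivAt_comp_flow_s17 hσ₀ hpres (F := fun ω =>
      Real.log (v ω ^ 2 + ε ^ 2) / 2) (M := M) ?_ ?_ (hreg_le ε) fun ω t => ?_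
    · refine Integrable.of_bound ?_ K (ae_of_all _ fun ω => hK _ (abs_le.1 (hvC ω)))
      exact ((Real.measurable_log.comp_aemeasurable ((hvm.pow_const 2).add_const _)).div_const
        2).aestronglyMeasurable
    · exact (((hvm.pow_const 2).div ((hvm.pow_const 2).add_const _)).mul hQm).aestronglyMeasurable
    · have hdv : HasDerivAt (fun s => v (σ s ω)) (v (σ t ω) * Q (σ t ω)) t := by
        have := sub_smul_slope (H (σ t ω)) (p (σ t ω)) (q (σ t ω))
        rw [smul_eq_mul, vsub_eq_sub] at this
        exact this ▸ (hqe ω t).sub (hpe ω t)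
      refine (((hdv.fun_pow 2).add_const (ε ^ 2)).log (hpos _).ne' |>.div_const 2).congr_deriv ?_
      push_cast
      ring
  have hlim : ∀ ω, Tendsto (fun ε => v ω ^ 2 / (v ω ^ 2 + ε ^ 2) * Q ω) (𝓝[>] 0) (𝓝 (Q ω)) := by
    intro ω
    by_cases hv0 : v ω = 0
    · have hQ0 : Q ω = 0 := by
        simp only [hQ, sub_eq_zero.1 hv0, slope_same]
      simp [hv0, hQ0]
    · have hcont : ContinuousAt (fun ε : ℝ => v ω ^ 2 / (v ω ^ 2 + ε ^ 2) * Q ω) 0 := by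
        fun_prop (disch := positivity)
      have h0 : v ω ^ 2 / (v ω ^ 2 + 0 ^ 2) * Q ω = Q ω := by
        rw [zero_pow two_ne_zero, add_zero, div_self (pow_ne_zero 2 hv0), one_mul]
      have := hcont.tendsto.mono_left (nhdsWithin_le_nhds (s := Ioi 0))
      rwa [h0] at this
  have hint := tendsto_integral_filter_of_dominated_convergence (fun _ => M)
    (Eventually.of_forall fun ε =>
      (((hvm.pow_const 2).div ((hvm.pow_const 2).add_const _)).mul hQm).aestronglyMeasurable)
    (Eventually.of_forall fun ε => ae_of_all _ (hreg_le ε)) (integrable_const M)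
    (ae_of_all _ hlim)
  exact tendsto_nhds_unique hint
    (tendsto_const_nhds.congr' (eventually_nhdsWithin_of_forall fun ε hε => (hreg ε hε).symm))

end Flow

section Integrals

variable {Ω : Type*} [MeasurableSpace Ω] {m : Measure Ω} {G g g' : Ω → ℝ → ℝ} {b₁ b₂ b₃ : Ω → ℝ}

theorem integral_add_integral_nonpos_of_integral_slope_eq_zero
    (hconc : ∀ᵐ ω ∂m, ConcaveFn (g ω)) (hG : ∀ ω x, HasDerivAt (G ω) (g ω x) x)
    (hg : ∀ ω, Continuous (g ω)) (hne : ∀ᵐ ω ∂m, b₁ ω ≠ b₂ ω)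
    (hg₁ : Integrable (fun ω => g ω (b₁ ω)) m) (hg₂ : Integrable (fun ω => g ω (b₂ ω)) m)
    (hQ : Integrable (fun ω => slope (G ω) (b₁ ω) (b₂ ω)) m)
    (hQ₀ : ∫ ω, slope (G ω) (b₁ ω) (b₂ ω) ∂m = 0) :
    ∫ ω, g ω (b₁ ω) ∂m + ∫ ω, g ω (b₂ ω) ∂m ≤ 0 := by
  rw [← integral_add hg₁ hg₂]
  calc _ ≤ ∫ ω, 2 * slope (G ω) (b₁ ω) (b₂ ω) ∂m :=
        integral_mono_ae (hg₁.add hg₂) (hQ.const_mul 2) <| by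
          filter_upwards [hconc, hne] with ω hc hω
          exact hc.add_le_two_mul_slope (hG ω) (hg ω) hω
    _ = 0 := by rw [integral_const_mul, hQ₀, mul_zero]

theorem integral_pos_of_integral_slope_eq_zero
    (hconc : ∀ᵐ ω ∂m, ConcaveFn (g ω)) (hG : ∀ ω x, HasDerivAt (G ω) (g ω x) x)
    (hg : ∀ ω, Continuous (g ω)) (hg' : ∀ ω x, HasDerivAt (g ω) (g' ω x) x)
    (hlt : ∀ᵐ ω ∂m, b₁ ω < b₂ ω ∧ b₂ ω < b₃ ω) (hg₂ : Integrable (fun ω => g ω (b₂ ω)) m)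
    (hQ₁₂ : Integrable (fun ω => slope (G ω) (b₁ ω) (b₂ ω)) m)
    (hQ₂₃ : Integrable (fun ω => slope (G ω) (b₂ ω) (b₃ ω)) m)
    (hQ₁₃ : Integrable (fun ω => slope (G ω) (b₁ ω) (b₃ ω)) m)
    (h₁₂ : ∫ ω, slope (G ω) (b₁ ω) (b₂ ω) ∂m = 0) (h₂₃ : ∫ ω, slope (G ω) (b₂ ω) (b₃ ω) ∂m = 0)
    (h₁₃ : ∫ ω, slope (G ω) (b₁ ω) (b₃ ω) ∂m = 0)
    (hpos : 0 < m {ω | g' ω (b₃ ω) < g' ω (b₁ ω)}) :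
    0 < ∫ ω, g ω (b₂ ω) ∂m := by
  set T : Ω → ℝ := fun ω => g ω (b₂ ω) -
    (slope (G ω) (b₁ ω) (b₂ ω) + slope (G ω) (b₂ ω) (b₃ ω) - slope (G ω) (b₁ ω) (b₃ ω))
  have hsum : Integrable (fun ω => slope (G ω) (b₁ ω) (b₂ ω) + slope (G ω) (b₂ ω) (b₃ ω)) m :=
    hQ₁₂.add hQ₂₃
  have hcomb : Integrable (fun ω => slope (G ω) (b₁ ω) (b₂ ω) + slope (G ω) (b₂ ω) (b₃ ω) -
      slope (G ω) (b₁ ω) (b₃ ω)) m := hsum.sub hQ₁₃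
  have hT : ∫ ω, T ω ∂m = ∫ ω, g ω (b₂ ω) ∂m := by
    rw [integral_sub hg₂ hcomb, integral_sub hsum hQ₁₃, integral_add hQ₁₂ hQ₂₃, h₁₂, h₂₃, h₁₃]
    simp
  have hT₀ : 0 ≤ᵐ[m] T := by
    filter_upwards [hconc, hlt] with ω hc ⟨h12, h23⟩
    exact sub_nonneg.2 (hc.slope_add_slope_sub_slope_le (hG ω) (hg ω) h12 h23)
  rw [← hT, integral_pos_iff_support_of_nonneg_ae hT₀ (hg₂.sub hcomb)]
  refine hpos.trans_le (measure_mono_ae ?_)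
  filter_upwards [hconc, hlt] with ω hc ⟨h12, h23⟩ hω
  exact (sub_pos.2 (hc.slope_add_slope_sub_slope_lt (hG ω) (hg ω) h12 h23 (hg' ω _) (hg' ω _)
    hω)).ne'

end Integrals

section SkewProduct

variable {Ω : Type*} [TopologicalSpace Ω] {H Hx Hxx : Ω → ℝ → ℝ}

theorem isClosed_setOf_concaveFn_s17 (hHx : Continuous fun p : Ω × ℝ => Hx p.1 p.2) :
    IsClosed {ω | ConcaveFn (Hx ω)} := by
  simp only [ConcaveFn, ofPred_forall]
  refine isClosed_iInter fun x₁ => isClosed_iInter fun x₂ => isClosed_iInter fun α =>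
    isClosed_iInter fun _ => isClosed_iInter fun _ => isClosed_le (by fun_prop) (by fun_prop)

theorem exists_forall_abs_le_of_continuous [CompactSpace Ω]
    (hHx : Continuous fun p : Ω × ℝ => Hx p.1 p.2) (C : ℝ) :
    ∃ M, ∀ ω x, |x| ≤ C → |Hx ω x| ≤ M := by
  obtain ⟨M, hM⟩ := IsCompact.exists_bound_of_continuousOn
    (isCompact_univ.prod (isCompact_Icc (a := -C) (b := C))) hHx.continuousOn
  exact ⟨M, fun ω x hx => hM (ω, x) ⟨mem_univ _, abs_le.1 hx⟩⟩

variable [MeasurableSpace Ω] [OpensMeasurableSpace Ω] {σ : ℝ → Ω → Ω} {m : Measure Ω}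

theorem lyapunov_signs_of_three_equilibria [CompactSpace Ω] [IsFiniteMeasure m]
    (hσ₀ : ∀ ω, σ 0 ω = ω) (hpres : ∀ t, MeasurePreserving (σ t) m m)
    (hHc : Continuous fun p : Ω × ℝ => H p.1 p.2) (hHxc : Continuous fun p : Ω × ℝ => Hx p.1 p.2)
    (hder : ∀ ω x, HasDerivAt (H ω) (Hx ω x) x) (hder2 : ∀ ω x, HasDerivAt (Hx ω) (Hxx ω x) x)
    {b₁ b₂ b₃ : Ω → ℝ} (hm₁ : AEMeasurable b₁ m) (hm₂ : AEMeasurable b₂ m)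
    (hm₃ : AEMeasurable b₃ m) (hb₁ : ∃ C, ∀ ω, |b₁ ω| ≤ C) (hb₂ : ∃ C, ∀ ω, |b₂ ω| ≤ C)
    (hb₃ : ∃ C, ∀ ω, |b₃ ω| ≤ C) (he₁ : IsEquilibrium σ H b₁) (he₂ : IsEquilibrium σ H b₂)
    (he₃ : IsEquilibrium σ H b₃) (hord : ∀ᵐ ω ∂m, b₁ ω < b₂ ω ∧ b₂ ω < b₃ ω)
    (hconc : ∀ᵐ ω ∂m, ConcaveFn (Hx ω)) (hS : 0 < m {ω | Hxx ω (b₃ ω) < Hxx ω (b₁ ω)}) :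
    (0 < ∫ ω, Hx ω (b₂ ω) ∂m) ∧ (∫ ω, Hx ω (b₁ ω) ∂m) < 0 ∧ (∫ ω, Hx ω (b₃ ω) ∂m) < 0 := by
  obtain ⟨C, hb₁C, hb₂C, hb₃C⟩ :
      ∃ C, (∀ ω, |b₁ ω| ≤ C) ∧ (∀ ω, |b₂ ω| ≤ C) ∧ ∀ ω, |b₃ ω| ≤ C := by
    obtain ⟨⟨C₁, h₁⟩, ⟨C₂, h₂⟩, ⟨C₃, h₃⟩⟩ := And.intro hb₁ (And.intro hb₂ hb₃)
    exact ⟨max C₁ (max C₂ C₃), fun ω => (h₁ ω).trans (by simp), fun ω => (h₂ ω).trans (by simp),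
      fun ω => (h₃ ω).trans (by simp)⟩
  obtain ⟨M, hHxM⟩ := exists_forall_abs_le_of_continuous hHxc C
  have hslope : ∀ ω {x y : ℝ}, |x| ≤ C → |y| ≤ C → |slope (H ω) x y| ≤ M := fun ω x y hx hy =>
    abs_slope_le_of_abs_deriv_le (convex_Icc (-C) C) (hder ω) (fun z hz => hHxM ω z (abs_le.2 hz))
      (abs_le.1 hx) (abs_le.1 hy)
  have hpair : ∀ {p q : Ω → ℝ}, AEMeasurable p m → AEMeasurable q m → (∀ ω, |p ω| ≤ C) →
      (∀ ω, |q ω| ≤ C) → IsEquilibrium σ H p → IsEquilibrium σ H q →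
      Integrable (fun ω => slope (H ω) (p ω) (q ω)) m ∧ ∫ ω, slope (H ω) (p ω) (q ω) ∂m = 0 :=
    fun hp hq hpC hqC hpe hqe =>
      ⟨.of_bound (hp.slope_comp hHc.measurable hq).aestronglyMeasurable M
        (ae_of_all _ fun ω => hslope ω (hpC ω) (hqC ω)),
      integral_slope_eq_zero hσ₀ hpres hHc.measurable hp hq hpC hqC hpe hqe
        fun ω => hslope ω (hpC ω) (hqC ω)⟩
  have hHxb : ∀ {b : Ω → ℝ}, AEMeasurable b m → (∀ ω, |b ω| ≤ C) →
      Integrable (fun ω => Hx ω (b ω)) m := fun hb hbC =>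
    .of_bound (hHxc.measurable.comp_aemeasurable (aemeasurable_id.prodMk hb)).aestronglyMeasurable
      M (ae_of_all _ fun ω => hHxM ω _ (hbC ω))
  obtain ⟨hQ₁₂, h₁₂⟩ := hpair hm₁ hm₂ hb₁C hb₂C he₁ he₂
  obtain ⟨hQ₂₃, h₂₃⟩ := hpair hm₂ hm₃ hb₂C hb₃C he₂ he₃
  obtain ⟨hQ₁₃, h₁₃⟩ := hpair hm₁ hm₃ hb₁C hb₃C he₁ he₃
  have hgc : ∀ ω, Continuous (Hx ω) := fun ω => hHxc.comp (Continuous.prodMk_right ω)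
  have hmid := integral_pos_of_integral_slope_eq_zero hconc hder hgc hder2 hord (hHxb hm₂ hb₂C)
    hQ₁₂ hQ₂₃ hQ₁₃ h₁₂ h₂₃ h₁₃ hS
  have hleft := integral_add_integral_nonpos_of_integral_slope_eq_zero hconc hder hgc
    (hord.mono fun _ h => h.1.ne) (hHxb hm₁ hb₁C) (hHxb hm₂ hb₂C) hQ₁₂ h₁₂
  have hright := integral_add_integral_nonpos_of_integral_slope_eq_zero hconc hder hgc
    (hord.mono fun _ h => h.2.ne) (hHxb hm₂ hb₂C) (hHxb hm₃ hb₃C) hQ₂₃ h₂₃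
  exact ⟨hmid, by linarith, by linarith⟩

end SkewProduct

theorem stmt17_general {Ω : Type*} [MetricSpace Ω] [CompactSpace Ω]
    [MeasurableSpace Ω] [BorelSpace Ω]
    (σ : ℝ → Ω → Ω) (hσ : IsFlow σ)
    (H Hx Hxx : Ω → ℝ → ℝ)
    (hHc : Continuous fun p : Ω × ℝ => H p.1 p.2)
    (hHxc : Continuous fun p : Ω × ℝ => Hx p.1 p.2)
    (hder : ∀ ω x, HasDerivAt (H ω) (Hx ω x) x)
    (hder2 : ∀ ω x, HasDerivAt (Hx ω) (Hxx ω x) x)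
    (m : MeasureTheory.Measure Ω) (herg : IsErgodicMeas σ m) :
    (∀ b₁ b₂ b₃ : Ω → ℝ,
      AEMeasurable b₁ m → AEMeasurable b₂ m → AEMeasurable b₃ m →
      (∃ C, ∀ ω, |b₁ ω| ≤ C) → (∃ C, ∀ ω, |b₂ ω| ≤ C) → (∃ C, ∀ ω, |b₃ ω| ≤ C) →
      IsEquilibrium σ H b₁ → IsEquilibrium σ H b₂ → IsEquilibrium σ H b₃ →
      (∀ᵐ ω ∂m, b₁ ω < b₂ ω ∧ b₂ ω < b₃ ω) →
      m {ω | ConcaveFn (Hx ω)} = 1 →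
      0 < m {ω | Hxx ω (b₃ ω) < Hxx ω (b₁ ω)} →
      (0 < ∫ ω, Hx ω (b₂ ω) ∂m) ∧ (∫ ω, Hx ω (b₁ ω) ∂m) < 0 ∧
        (∫ ω, Hx ω (b₃ ω) ∂m) < 0) ∧
    (m {ω | ConcaveFn (Hx ω)} = 1 →
      (∀ c₁ c₂ c₃ : Ω → ℝ,
        AEMeasurable c₁ m → AEMeasurable c₂ m → AEMeasurable c₃ m →
        (∃ C, ∀ ω, |c₁ ω| ≤ C) → (∃ C, ∀ ω, |c₂ ω| ≤ C) → (∃ C, ∀ ω, |c₃ ω| ≤ C) →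
        IsEquilibrium σ H c₁ → IsEquilibrium σ H c₂ → IsEquilibrium σ H c₃ →
        (∀ᵐ ω ∂m, c₁ ω < c₂ ω ∧ c₂ ω < c₃ ω) →
        0 < m {ω | Hxx ω (c₃ ω) < Hxx ω (c₁ ω)}) →
      ¬ ∃ c₁ c₂ c₃ c₄ : Ω → ℝ,
          AEMeasurable c₁ m ∧ AEMeasurable c₂ m ∧ AEMeasurable c₃ m ∧ AEMeasurable c₄ m ∧
          (∃ C, ∀ ω, |c₁ ω| ≤ C) ∧ (∃ C, ∀ ω, |c₂ ω| ≤ C) ∧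
          (∃ C, ∀ ω, |c₃ ω| ≤ C) ∧ (∃ C, ∀ ω, |c₄ ω| ≤ C) ∧
          IsEquilibrium σ H c₁ ∧ IsEquilibrium σ H c₂ ∧
          IsEquilibrium σ H c₃ ∧ IsEquilibrium σ H c₄ ∧
          (∀ᵐ ω ∂m, c₁ ω < c₂ ω ∧ c₂ ω < c₃ ω ∧ c₃ ω < c₄ ω)) := by
  have := herg.1
  have hconc : m {ω | ConcaveFn (Hx ω)} = 1 → ∀ᵐ ω ∂m, ConcaveFn (Hx ω) := fun h =>
    (ae_iff_measure_eq (isClosed_setOf_concaveFn_s17 hHxc).measurableSet.nullMeasurableSet).2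
      (by rw [h, measure_univ])
  have hsigns := fun {b₁ b₂ b₃ : Ω → ℝ} => lyapunov_signs_of_three_equilibria (b₁ := b₁) (b₂ := b₂)
    (b₃ := b₃) hσ.2.1 herg.2.1 hHc hHxc hder hder2
  refine ⟨fun b₁ b₂ b₃ hm₁ hm₂ hm₃ hb₁ hb₂ hb₃ he₁ he₂ he₃ hord hc hS =>
    hsigns hm₁ hm₂ hm₃ hb₁ hb₂ hb₃ he₁ he₂ he₃ hord (hconc hc) hS, ?_⟩
  rintro hc hS ⟨c₁, c₂, c₃, c₄, hm₁, hm₂, hm₃, hm₄, hb₁, hb₂, hb₃, hb₄, he₁, he₂, he₃, he₄, hord⟩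
  have hord₁₂₃ : ∀ᵐ ω ∂m, c₁ ω < c₂ ω ∧ c₂ ω < c₃ ω := hord.mono fun _ h => ⟨h.1, h.2.1⟩
  have hord₂₃₄ : ∀ᵐ ω ∂m, c₂ ω < c₃ ω ∧ c₃ ω < c₄ ω := hord.mono fun _ h => h.2
  have h₁₂₃ := hsigns hm₁ hm₂ hm₃ hb₁ hb₂ hb₃ he₁ he₂ he₃ hord₁₂₃ (hconc hc)
    (hS _ _ _ hm₁ hm₂ hm₃ hb₁ hb₂ hb₃ he₁ he₂ he₃ hord₁₂₃)
  have h₂₃₄ := hsigns hm₂ hm₃ hm₄ hb₂ hb₃ hb₄ he₂ he₃ he₄ hord₂₃₄ (hconc hc)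
    (hS _ _ _ hm₂ hm₃ hm₄ hb₂ hb₃ hb₄ he₂ he₃ he₄ hord₂₃₄)
  exact h₁₂₃.2.2.not_gt h₂₃₄.1

/-- Three ordered bounded measurable equilibria for a d-concave skew-product flow produce
Lyapunov exponents with signs `-,+,-`; in particular there are at most three bounded
measurable equilibria strictly ordered almost everywhere. -/
theorem stmt17 {Ω : Type*} [MetricSpace Ω] [CompactSpace Ω]
    [MeasurableSpace Ω] [BorelSpace Ω]
    (σ : ℝ → Ω → Ω) (hσ : IsFlow σ)
    (H Hx Hxx : Ω → ℝ → ℝ)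
    (hHc : Continuous fun p : Ω × ℝ => H p.1 p.2)
    (hHxc : Continuous fun p : Ω × ℝ => Hx p.1 p.2)
    (hHxxc : Continuous fun p : Ω × ℝ => Hxx p.1 p.2)
    (hder : ∀ ω x, HasDerivAt (H ω) (Hx ω x) x)
    (hder2 : ∀ ω x, HasDerivAt (Hx ω) (Hxx ω x) x)
    (m : MeasureTheory.Measure Ω) (herg : IsErgodicMeas σ m) :
    (∀ b₁ b₂ b₃ : Ω → ℝ,
      AEMeasurable b₁ m → AEMeasurable b₂ m → AEMeasurable b₃ m →
      (∃ C, ∀ ω, |b₁ ω| ≤ C) → (∃ C, ∀ ω, |b₂ ω| ≤ C) → (∃ C, ∀ ω, |b₃ ω| ≤ C) →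
      IsEquilibrium σ H b₁ → IsEquilibrium σ H b₂ → IsEquilibrium σ H b₃ →
      (∀ᵐ ω ∂m, b₁ ω < b₂ ω ∧ b₂ ω < b₃ ω) →
      m {ω | ConcaveFn (Hx ω)} = 1 →
      0 < m {ω | Hxx ω (b₃ ω) < Hxx ω (b₁ ω)} →
      (0 < ∫ ω, Hx ω (b₂ ω) ∂m) ∧ (∫ ω, Hx ω (b₁ ω) ∂m) < 0 ∧
        (∫ ω, Hx ω (b₃ ω) ∂m) < 0) ∧
    (m {ω | ConcaveFn (Hx ω)} = 1 →
      (∀ c₁ c₂ c₃ : Ω → ℝ,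
        AEMeasurable c₁ m → AEMeasurable c₂ m → AEMeasurable c₃ m →
        (∃ C, ∀ ω, |c₁ ω| ≤ C) → (∃ C, ∀ ω, |c₂ ω| ≤ C) → (∃ C, ∀ ω, |c₃ ω| ≤ C) →
        IsEquilibrium σ H c₁ → IsEquilibrium σ H c₂ → IsEquilibrium σ H c₃ →
        (∀ᵐ ω ∂m, c₁ ω < c₂ ω ∧ c₂ ω < c₃ ω) →
        0 < m {ω | Hxx ω (c₃ ω) < Hxx ω (c₁ ω)}) →
      ¬ ∃ c₁ c₂ c₃ c₄ : Ω → ℝ,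
          AEMeasurable c₁ m ∧ AEMeasurable c₂ m ∧ AEMeasurable c₃ m ∧ AEMeasurable c₄ m ∧
          (∃ C, ∀ ω, |c₁ ω| ≤ C) ∧ (∃ C, ∀ ω, |c₂ ω| ≤ C) ∧
          (∃ C, ∀ ω, |c₃ ω| ≤ C) ∧ (∃ C, ∀ ω, |c₄ ω| ≤ C) ∧
          IsEquilibrium σ H c₁ ∧ IsEquilibrium σ H c₂ ∧
          IsEquilibrium σ H c₃ ∧ IsEquilibrium σ H c₄ ∧
          (∀ᵐ ω ∂m, c₁ ω < c₂ ω ∧ c₂ ω < c₃ ω ∧ c₃ ω < c₄ ω)) :=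
  stmt17_general σ hσ H Hx Hxx hHc hHxc hder hder2 m herg
end
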